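/- arXiv:1710.04965 — 3 statements merged into one kernel-verified Lean document; each statement's English description precedes it below -/
import Mathlib

section
/- Let H be a complex Hilbert space, R a selfadjoint unitary operator on H (so ρ(T) := R T R defines the twist), J an antiunitary operator with J∘J = ε·id (ε ∈ {1, −1}), and u a unitary operator satisfying u (J u J⁻¹) = (J u J⁻¹) u. Set U := u (J u J⁻¹). Then for every linear map D : H → H and all ψ, φ ∈ H: ⟨J(Uψ), R·((ρ(U) D U†)(Uφ))⟩ = ⟨Jψ, R(Dφ)⟩. That is, the bilinear form 𝔄_D(ψ,φ) := ⟨Jψ, Dφ⟩_ρ = ⟨Jψ, R(Dφ)⟩ is invariant under the simultaneous twisted gauge transformation D ↦ ρ(U) D U†, ψ ↦ Uψ. -/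
/-!
`U = u ∘ (J u J⁻¹)` preserves inner products, being a composition of isometries and
antiunitaries, so `U† U = 1` and `ρ(U) = R U R` cancels against the outer `R` because `R² = 1`.
What remains is `⟨J(Uψ), Uχ⟩ = ⟨Jψ, χ⟩`: after using the order-zero condition to move `J` to the
front of `Uχ`, the two copies of `u` cancel and one is left comparing `J²(u J⁻¹ψ)` with `u Jψ`,
which agree because `J² = ε` is a scalar.
-/

open ContinuousLinearMap

local notation "⟪" x ", " y "⟫" => @inner ℂ _ _ x y

section Antiunitary

variable {H : Type*} [NormedAddCommGroup H] [InnerProductSpace ℂ H]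

def adjointAction (u J Jinv : H → H) (x : H) : H :=
  u (J (u (Jinv x)))

theorem inner_rightInverse_rightInverse {J Jinv : H → H}
    (hJinner : ∀ ξ η, ⟪J ξ, J η⟫ = ⟪η, ξ⟫) (hJinv : ∀ x, J (Jinv x) = x) (a b : H) :
    ⟪Jinv a, Jinv b⟫ = ⟪b, a⟫ := by
  rw [← hJinner, hJinv, hJinv]

theorem inner_rightInverse_apply {J Jinv : H → H}
    (hJinner : ∀ ξ η, ⟪J ξ, J η⟫ = ⟪η, ξ⟫) (hJinv : ∀ x, J (Jinv x) = x) (a b : H) :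
    ⟪Jinv a, J b⟫ = ⟪J (J b), a⟫ := by
  rw [← hJinner (J b) (Jinv a), hJinv]

theorem inner_adjointAction_adjointAction {u J Jinv : H → H}
    (hu : ∀ x y, ⟪u x, u y⟫ = ⟪x, y⟫) (hJinner : ∀ ξ η, ⟪J ξ, J η⟫ = ⟪η, ξ⟫)
    (hJinv : ∀ x, J (Jinv x) = x) (x y : H) :
    ⟪adjointAction u J Jinv x, adjointAction u J Jinv y⟫ = ⟪x, y⟫ := by
  rw [adjointAction, adjointAction, hu, hJinner, hu, inner_rightInverse_rightInverse hJinner hJinv]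

theorem inner_apply_adjointAction_adjointAction {u J Jinv : H → H} {ε : ℂ}
    (hu : ∀ x y, ⟪u x, u y⟫ = ⟪x, y⟫) (hJinner : ∀ ξ η, ⟪J ξ, J η⟫ = ⟪η, ξ⟫)
    (hJinv : ∀ x, J (Jinv x) = x) (hJJ : ∀ x, J (J x) = ε • x)
    (h0 : ∀ x, u (J (u (Jinv x))) = J (u (Jinv (u x)))) (ψ χ : H) :
    ⟪J (adjointAction u J Jinv ψ), adjointAction u J Jinv χ⟫ = ⟪J ψ, χ⟫ := by
  have hJ : J ψ = ε • Jinv ψ := by rw [← hJJ, hJinv]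
  calc ⟪J (adjointAction u J Jinv ψ), adjointAction u J Jinv χ⟫
      = ⟪Jinv (u χ), J (u (Jinv ψ))⟫ := by
        rw [adjointAction, adjointAction, h0 χ, hJinner, hu]
    _ = ⟪ε • u (Jinv ψ), u χ⟫ := by rw [inner_rightInverse_apply hJinner hJinv, hJJ]
    _ = ⟪J ψ, χ⟫ := by rw [inner_smul_left, hu, hJ, inner_smul_left]

theorem leftInverse_of_inner_map_map {U Udag : H → H}
    (hU : ∀ x y, ⟪U x, U y⟫ = ⟪x, y⟫) (hUdag : ∀ x y, ⟪Udag x, y⟫ = ⟪x, U y⟫) (x : H) :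
    Udag (U x) = x :=
  ext_inner_right ℂ fun y ↦ by rw [hUdag, hU]

end Antiunitary

theorem stmt_5_general {H : Type*} [NormedAddCommGroup H] [InnerProductSpace ℂ H]
    [CompleteSpace H] (R : H →L[ℂ] H)
    (hR2 : R ∘L R = 1)
    (J Jinv : H → H)
    (hJinner : ∀ ξ η, ⟪J ξ, J η⟫ = ⟪η, ξ⟫)
    (hJinv2 : ∀ x, J (Jinv x) = x)
    (ε : ℂ)
    (hJJ : ∀ x, J (J x) = ε • x)
    (u : H →L[ℂ] H)
    (hu1 : adjoint u ∘L u = 1)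
    (h0 : ∀ x, u (J (u (Jinv x))) = J (u (Jinv (u x))))
    (U : H → H) (hU : ∀ x, U x = u (J (u (Jinv x))))
    (Udag : H → H) (hUdag : ∀ x y, ⟪Udag x, y⟫ = ⟪x, U y⟫)
    (D : H →ₗ[ℂ] H) (ψ φ : H) :
    ⟪J (U ψ), R (R (U (R (D (Udag (U φ))))))⟫ = ⟪J ψ, R (D φ)⟫ := by
  obtain rfl : U = adjointAction u J Jinv := funext hU
  have hu := (inner_map_map_iff_adjoint_comp_self u).2 hu1
  have hRR : ∀ y, R (R y) = y := fun y ↦ by simpa using DFunLike.congr_fun hR2 y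
  rw [leftInverse_of_inner_map_map (inner_adjointAction_adjointAction hu hJinner hJinv2) hUdag,
    hRR, inner_apply_adjointAction_adjointAction hu hJinner hJinv2 hJJ h0]

/-- Prop. 3.1 / gauge invariance of the twisted fermionic action:
With `R` a selfadjoint unitary (twist `ρ(T) = R T R`), `J` antiunitary with
`J∘J = ε·id`, `u` unitary satisfying the order-zero condition, and
`U = Ad(u) = u (J u J⁻¹)` with Hilbert adjoint `U†`, for every linear map
`D : H → H` and all `ψ, φ`:
`⟨J(Uψ), R ((ρ(U) D U†)(Uφ))⟩ = ⟨Jψ, R(Dφ)⟩`, i.e. the bilinear form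
`𝔄_D(ψ,φ) = ⟨Jψ, Dφ⟩_ρ` is invariant under the twisted gauge transformation
`D ↦ ρ(U) D U†`, `ψ ↦ Uψ`. -/
theorem stmt_5 {H : Type*} [NormedAddCommGroup H] [InnerProductSpace ℂ H]
    [CompleteSpace H] (R : H →L[ℂ] H)
    (hRsa : adjoint R = R) (hR2 : R ∘L R = 1)
    (J Jinv : H → H)
    (hJadd : ∀ x y, J (x + y) = J x + J y)
    (hJsmul : ∀ (c : ℂ) (x : H), J (c • x) = (starRingEnd ℂ c) • J x)
    (hJinner : ∀ ξ η, ⟪J ξ, J η⟫ = ⟪η, ξ⟫)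
    (hJbij : Function.Bijective J)
    (hJinv1 : ∀ x, Jinv (J x) = x) (hJinv2 : ∀ x, J (Jinv x) = x)
    (ε : ℂ) (hε : ε = 1 ∨ ε = -1)
    (hJJ : ∀ x, J (J x) = ε • x)
    (u : H →L[ℂ] H)
    (hu1 : adjoint u ∘L u = 1) (hu2 : u ∘L adjoint u = 1)
    (h0 : ∀ x, u (J (u (Jinv x))) = J (u (Jinv (u x))))
    (U : H → H) (hU : ∀ x, U x = u (J (u (Jinv x))))
    (Udag : H → H) (hUdag : ∀ x y, ⟪Udag x, y⟫ = ⟪x, U y⟫)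
    (D : H →ₗ[ℂ] H) (ψ φ : H) :
    ⟪J (U ψ), R (R (U (R (D (Udag (U φ))))))⟫ = ⟪J ψ, R (D φ)⟫ :=
  stmt_5_general R hR2 J Jinv hJinner hJinv2 ε hJJ u hu1 h0 U hU Udag hUdag D ψ φ
end

section
/- Let H be a complex Hilbert space, R a selfadjoint unitary operator, J an antiunitary operator with J∘J = ε·id and J R = ε‴ R J, and D a bounded operator with J∘D = ε′·D∘J which is ρ-hermitian, i.e. R D† R = D, where ε, ε′, ε‴ ∈ {1, −1}. Then for all ψ, φ ∈ H: ⟨Jψ, R(Dφ)⟩ = ε ε′ ε‴ ⟨Jφ, R(Dψ)⟩. That is, the bilinear form 𝔄^ρ_D(ψ,φ) := ⟨Jψ, Dφ⟩_ρ is (ε ε′ ε‴)-symmetric on all of H. -/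
open ContinuousLinearMap

local notation "⟪" x ", " y "⟫" => @inner ℂ _ _ x y

/-- Prop. 3.3: With `R` a selfadjoint unitary, `J` antiunitary
with `J∘J = ε·id` and `J R = ε‴ R J`, and `D` bounded with `J D = ε′ D J` and
ρ-hermitian (`R D† R = D`), the twisted fermionic form satisfies
`⟨Jψ, R(Dφ)⟩ = ε ε′ ε‴ ⟨Jφ, R(Dψ)⟩` for all `ψ, φ ∈ H`. -/
theorem stmt_7 {H : Type*} [NormedAddCommGroup H] [InnerProductSpace ℂ H]
    [CompleteSpace H] (R : H →L[ℂ] H)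
    (hRsa : adjoint R = R) (hR2 : R ∘L R = 1)
    (J : H → H)
    (hJadd : ∀ x y, J (x + y) = J x + J y)
    (hJsmul : ∀ (c : ℂ) (x : H), J (c • x) = (starRingEnd ℂ c) • J x)
    (hJinner : ∀ ξ η, ⟪J ξ, J η⟫ = ⟪η, ξ⟫)
    (hJbij : Function.Bijective J)
    (ε : ℂ) (hε : ε = 1 ∨ ε = -1)
    (hJJ : ∀ x, J (J x) = ε • x)
    (ε''' : ℂ) (hε''' : ε''' = 1 ∨ ε''' = -1)
    (hJR : ∀ x, J (R x) = ε''' • R (J x))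
    (D : H →L[ℂ] H)
    (ε' : ℂ) (hε' : ε' = 1 ∨ ε' = -1)
    (hDJ : ∀ x, D (J x) = ε' • J (D x))
    (hDherm : R ∘L adjoint D ∘L R = D)
    (ψ φ : H) :
    ⟪J ψ, R (D φ)⟫ = ε * ε' * ε''' * ⟪J φ, R (D ψ)⟫ := by
  have hε2 : ε * ε = 1 := by rcases hε with h|h <;> simp [h]
  have hε'2 : ε' * ε' = 1 := by rcases hε' with h|h <;> simp [h]
  have hJD : ∀ x, J (D x) = ε' • D (J x) := by
    intro x
    have h := hDJ x
    calc J (D x) = (ε' * ε') • J (D x) := by rw [hε'2, one_smul]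
      _ = ε' • (ε' • J (D x)) := by rw [smul_smul]
      _ = ε' • D (J x) := by rw [← h]
  have h1 : J (R (D φ)) = (ε''' * ε') • R (D (J φ)) := by
    rw [hJR, hJD, map_smul, smul_smul]
  have hconj : (starRingEnd ℂ) (ε''' * ε') = ε''' * ε' := by
    rcases hε''' with h|h <;> rcases hε' with h'|h' <;> simp [h, h']
  have hDadj : adjoint D = R ∘L D ∘L R := by
    conv_lhs => rw [← hDherm]
    rw [adjoint_comp, adjoint_comp, adjoint_adjoint, hRsa]
    rfl
  have hRR : ∀ x, R (R x) = x := fun x => by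
    have h := congrArg (fun T => T x) hR2; simpa using h
  have hDadjR : adjoint D (R ψ) = R (D ψ) := by
    rw [hDadj]; simp [hRR]
  calc ⟪J ψ, R (D φ)⟫
      = ⟪J ψ, ε • J (J (R (D φ)))⟫ := by rw [hJJ, smul_smul, hε2, one_smul]
    _ = ε * ⟪J ψ, J (J (R (D φ)))⟫ := inner_smul_right _ _ _
    _ = ε * ⟪J (R (D φ)), ψ⟫ := by rw [hJinner]
    _ = ε * ⟪(ε''' * ε') • R (D (J φ)), ψ⟫ := by rw [h1]
    _ = ε * ((ε''' * ε') * ⟪R (D (J φ)), ψ⟫) := by rw [inner_smul_left, hconj]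
    _ = ε * ((ε''' * ε') * ⟪D (J φ), R ψ⟫) := by
          have hRinner : ∀ x y : H, ⟪R x, y⟫ = ⟪x, R y⟫ := by
            intro x y
            conv_lhs => rw [← hRsa]
            exact adjoint_inner_left _ _ _
          rw [hRinner]
    _ = ε * ((ε''' * ε') * ⟪J φ, adjoint D (R ψ)⟫) := by
          rw [adjoint_inner_right]
    _ = ε * ((ε''' * ε') * ⟪J φ, R (D ψ)⟫) := by rw [hDadjR]
    _ = ε * ε' * ε''' * ⟪J φ, R (D ψ)⟫ := by ring
end

section
/- Let R be a selfadjoint unitary operator on a complex Hilbert space H and J an antiunitary operator with J R = ε‴ R J for some ε‴ ∈ {1, −1}. Let D and A be bounded operators that are both ρ-hermitian: R D† R = D and R A† R = A. Then the twisted fluctuation D_A := D + A + J A J⁻¹ is ρ-hermitian: R (D_A)† R = D_A. -/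
open ContinuousLinearMap

local notation "⟪" x ", " y "⟫" => @inner ℂ _ _ x y

/-- Prop. 3.4, first claim: With `R` a selfadjoint unitary, `J`
antiunitary with `J R = ε‴ R J`, and `D`, `A` bounded ρ-hermitian operators
(`R D† R = D`, `R A† R = A`), the twisted fluctuation
`D_A = D + A + J A J⁻¹` is ρ-hermitian: `R (D_A)† R = D_A`. -/
theorem stmt_9 {H : Type*} [NormedAddCommGroup H] [InnerProductSpace ℂ H]
    [CompleteSpace H] (R : H →L[ℂ] H)
    (hRsa : adjoint R = R) (hR2 : R ∘L R = 1)
    (J Jinv : H → H)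
    (hJadd : ∀ x y, J (x + y) = J x + J y)
    (hJsmul : ∀ (c : ℂ) (x : H), J (c • x) = (starRingEnd ℂ c) • J x)
    (hJinner : ∀ ξ η, ⟪J ξ, J η⟫ = ⟪η, ξ⟫)
    (hJbij : Function.Bijective J)
    (hJinv1 : ∀ x, Jinv (J x) = x) (hJinv2 : ∀ x, J (Jinv x) = x)
    (ε''' : ℂ) (hε''' : ε''' = 1 ∨ ε''' = -1)
    (hJR : ∀ x, J (R x) = ε''' • R (J x))
    (D A : H →L[ℂ] H)
    (hDherm : R ∘L adjoint D ∘L R = D)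
    (hAherm : R ∘L adjoint A ∘L R = A)
    (B : H →L[ℂ] H) (hB : ∀ x, B x = J (A (Jinv x))) :
    R ∘L adjoint (D + A + B) ∘L R = D + A + B := by
  have hεstar : starRingEnd ℂ ε''' = ε''' := by rcases hε''' with h | h <;> simp [h]
  have hε2 : ε''' * ε''' = 1 := by rcases hε''' with h | h <;> norm_num [h]
  have hR2' : ∀ z, R (R z) = z := by
    intro z
    have := congrFun (congrArg (⇑) hR2) z
    simpa using this
  have hRinner : ∀ x y : H, ⟪R x, y⟫ = ⟪x, R y⟫ := by
    intro x y
    conv_lhs => rw [← hRsa]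
    exact adjoint_inner_left R y x
  -- Jinv ∘ R = ε''' • R ∘ Jinv
  have hRJinv : ∀ x, Jinv (R x) = ε''' • R (Jinv x) := by
    intro x
    have h1 : J (ε''' • R (Jinv x)) = R x := by
      rw [hJsmul, hεstar, hJR, smul_smul, hε2, one_smul, hJinv2]
    calc Jinv (R x) = Jinv (J (ε''' • R (Jinv x))) := by rw [h1]
      _ = ε''' • R (Jinv x) := hJinv1 _
  -- pointwise formula for the adjoint of A
  have hA' : ∀ z, adjoint A z = R (A (R z)) := by
    intro z
    have h1 : R (adjoint A (R (R z))) = A (R z) :=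
      congrFun (congrArg (⇑) hAherm) (R z)
    rw [hR2'] at h1
    calc adjoint A z = R (R (adjoint A z)) := (hR2' _).symm
      _ = R (A (R z)) := by rw [h1]
  -- adjoint B = R ∘L B ∘L R
  have hBadj : R ∘L B ∘L R = adjoint B := by
    rw [ContinuousLinearMap.eq_adjoint_iff]
    intro x y
    calc ⟪(R ∘L B ∘L R) x, y⟫
        = ⟪B (R x), R y⟫ := hRinner _ _
      _ = ⟪J (ε''' • A (R (Jinv x))), J (ε''' • R (Jinv y))⟫ := by
          rw [hB, hRJinv, map_smul,
            show R y = J (ε''' • R (Jinv y)) by rw [← hRJinv, hJinv2]]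
      _ = ⟪ε''' • R (Jinv y), ε''' • A (R (Jinv x))⟫ := hJinner _ _
      _ = ⟪R (Jinv y), A (R (Jinv x))⟫ := by
          rw [inner_smul_left, inner_smul_right, hεstar, ← mul_assoc, hε2, one_mul]
      _ = ⟪Jinv y, R (A (R (Jinv x)))⟫ := hRinner _ _
      _ = ⟪Jinv y, adjoint A (Jinv x)⟫ := by rw [hA']
      _ = ⟪A (Jinv y), Jinv x⟫ := adjoint_inner_right _ _ _
      _ = ⟪J (Jinv x), J (A (Jinv y))⟫ := (hJinner _ _).symm
      _ = ⟪x, B y⟫ := by rw [hJinv2, hB]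
  have hBherm : R ∘L adjoint B ∘L R = B := by
    rw [← hBadj]
    ext z
    simp [hR2']
  rw [map_add, map_add, add_comp, add_comp, comp_add, comp_add, hDherm, hAherm, hBherm]
end
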